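/- arXiv:2105.14654 — 2 statements merged into one kernel-verified Lean document; each statement's English description precedes it below -/
import Mathlib

section
/- Giving a distributive law between monads T₁ and T₂ on a category C is equivalent to giving a monad structure on T₁ in the category of monads on C; that is, distributive laws correspond bijectively to monads in the category of monads. -/
open CategoryTheory

universe v u

variable (C : Type u) [Category.{v} C]

/-- A distributive law between monads `T₁` and `T₂` on `C`: a natural transformation
`α : T₁T₂ ⟶ T₂T₁` satisfying Beck's four compatibility axioms with the multiplications
and units of `T₁` and `T₂`. -/
structure DistributiveLaw {C : Type u} [Category.{v} C] (T₁ T₂ : Monad C) where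
  α : T₂.toFunctor ⋙ T₁.toFunctor ⟶ T₁.toFunctor ⋙ T₂.toFunctor
  mul₂ : ∀ X : C, T₁.toFunctor.map (T₂.μ.app X) ≫ α.app X
    = α.app (T₂.toFunctor.obj X) ≫ T₂.toFunctor.map (α.app X)
        ≫ T₂.μ.app (T₁.toFunctor.obj X)
  unit₂ : ∀ X : C, T₁.toFunctor.map (T₂.η.app X) ≫ α.app X
    = T₂.η.app (T₁.toFunctor.obj X)
  mul₁ : ∀ X : C, T₁.μ.app (T₂.toFunctor.obj X) ≫ α.app X
    = T₁.toFunctor.map (α.app X) ≫ α.app (T₁.toFunctor.obj X)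
        ≫ T₂.toFunctor.map (T₁.μ.app X)
  unit₁ : ∀ X : C, T₁.η.app (T₂.toFunctor.obj X) ≫ α.app X
    = T₂.toFunctor.map (T₁.η.app X)

/-- A monad in the (2-)category of monads on `C`: an underlying object `base` (a monad
on `C`), a 1-cell from `base` to itself, i.e. an endofunctor `F` together with a
natural transformation `φ : base ∘ F ⟶ F ∘ base` compatible with the unit and
multiplication of `base`, and 2-cells `e : id ⟶ F` and `m : F ∘ F ⟶ F` that are monad
transformations and satisfy the monad laws. -/
structure MonadInMonads where
  base : Monad C
  F : C ⥤ C
  φ : base.toFunctor ⋙ F ⟶ F ⋙ base.toFunctor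
  mul_comp : ∀ X : C, F.map (base.μ.app X) ≫ φ.app X
    = φ.app (base.toFunctor.obj X) ≫ base.toFunctor.map (φ.app X)
        ≫ base.μ.app (F.obj X)
  unit_comp : ∀ X : C, F.map (base.η.app X) ≫ φ.app X = base.η.app (F.obj X)
  e : 𝟭 C ⟶ F
  m : F ⋙ F ⟶ F
  e_compat : ∀ X : C, e.app (base.toFunctor.obj X) ≫ φ.app X
    = base.toFunctor.map (e.app X)
  m_compat : ∀ X : C, m.app (base.toFunctor.obj X) ≫ φ.app X
    = F.map (φ.app X) ≫ φ.app (F.obj X) ≫ base.toFunctor.map (m.app X)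
  left_unit : ∀ X : C, e.app (F.obj X) ≫ m.app X = 𝟙 (F.obj X)
  right_unit : ∀ X : C, F.map (e.app X) ≫ m.app X = 𝟙 (F.obj X)
  assoc : ∀ X : C, F.map (m.app X) ≫ m.app X = m.app (F.obj X) ≫ m.app X

/-- Distributive laws between `T₁` and `T₂` correspond bijectively to monad structures
on `T₁` in the category of monads on `C` with underlying object `T₂`, i.e. to monads in
the category of monads whose base is `T₂` and whose underlying 1-cell and 2-cells are
given by the functor, unit and multiplication of `T₁`. -/
theorem distributiveLaw_equiv_monadInMonads {C : Type u} [Category.{v} C]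
    (T₁ T₂ : Monad C) :
    Nonempty (DistributiveLaw T₁ T₂ ≃
      {M : MonadInMonads C // M.base = T₂ ∧ M.F = T₁.toFunctor
        ∧ HEq M.e T₁.η ∧ HEq M.m T₁.μ}) := by
  refine ⟨{
    toFun := fun D => ⟨{
      base := T₂, F := T₁.toFunctor, φ := D.α
      mul_comp := D.mul₂, unit_comp := D.unit₂
      e := T₁.η, m := T₁.μ
      e_compat := D.unit₁, m_compat := D.mul₁
      left_unit := T₁.left_unit, right_unit := T₁.right_unit
      assoc := fun X => T₁.assoc X }, rfl, rfl, HEq.rfl, HEq.rfl⟩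
    invFun := fun M => by
      obtain ⟨⟨base, F, φ, mc, uc, e, m, ec, mmc, lu, ru, as⟩, hb, hF, he, hm⟩ := M
      dsimp only at hb hF he hm
      subst hb; subst hF
      have he' := eq_of_heq he
      have hm' := eq_of_heq hm
      subst he'; subst hm'
      exact ⟨φ, mc, uc, mmc, ec⟩
    left_inv := fun D => by cases D; rfl
    right_inv := fun M => by
      obtain ⟨⟨base, F, φ, mc, uc, e, m, ec, mmc, lu, ru, as⟩, hb, hF, he, hm⟩ := M
      dsimp only at hb hF he hm
      subst hb; subst hF
      have he' := eq_of_heq he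
      have hm' := eq_of_heq hm
      subst he'; subst hm'
      rfl }⟩
end

section
/- Let a : S → S' be a monotone endpoint-preserving (active) map of finite linear orders and s : S → S'' a surjective active monotone map. Then there exists a pushout of a along s in the category of finite linear orders with active monotone maps, computed by contracting in S' all segments lying in the image of segments contracted by s. -/
/-- A monotone map between finite linear orders is active if it preserves the bottom and
the top element. -/
def ActiveMap {n m : ℕ} (f : Fin (n + 1) →o Fin (m + 1)) : Prop :=
  f 0 = 0 ∧ f (Fin.last n) = Fin.last m

/-!
A step `i → i + 1` of `S'` is collapsed when it lies between `a j` and `a j'` for some `j, j'`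
identified by `s`; the pushout contracts these steps, `p x` being the number of uncollapsed steps
below `x`. A monotone `f` with `f ∘ a = g ∘ s` is constant across every collapsed step, which is
squeezed between two points where `f` takes the same value, hence constant on the fibres of `p`.
Both `b` and the mediating map are then obtained by factoring a fibre-constant monotone map
through a surjective monotone map of linear orders.
-/

theorem ActiveMap.comp {n m l : ℕ} {f : Fin (n + 1) →o Fin (m + 1)}
    {g : Fin (m + 1) →o Fin (l + 1)} (hg : ActiveMap g) (hf : ActiveMap f) :
    ActiveMap (g.comp f) := by
  simp only [ActiveMap, OrderHom.comp_coe, Function.comp_apply, hf.1, hf.2, hg.1, hg.2, and_self]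

theorem ActiveMap.of_comp {n m l : ℕ} {f : Fin (n + 1) →o Fin (m + 1)}
    {g : Fin (m + 1) →o Fin (l + 1)} (hf : ActiveMap f) (hgf : ActiveMap (g.comp f)) :
    ActiveMap g := by
  obtain ⟨h0, hlast⟩ := hgf
  simp only [OrderHom.comp_coe, Function.comp_apply, hf.1, hf.2] at h0 hlast
  exact ⟨h0, hlast⟩

namespace OrderHom

variable {α β γ : Type*}

theorem cancel_right_of_surjective [Preorder α] [Preorder β] [Preorder γ] {p : α →o β}
    (hp : Function.Surjective p) {f g : β →o γ} (h : f.comp p = g.comp p) : f = g :=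
  DFunLike.coe_injective (hp.injective_comp_right (congrArg DFunLike.coe h))

theorem existsUnique_comp_eq_of_surjective [LinearOrder α] [PartialOrder β] [Preorder γ]
    {p : α →o β} (hp : Function.Surjective p) {f : α →o γ}
    (hf : ∀ x y, p x = p y → f x = f y) : ∃! h : β →o γ, h.comp p = f := by
  have hmono : Monotone (f ∘ Function.surjInv hp) := by
    intro y y' hy
    rcases le_total (Function.surjInv hp y) (Function.surjInv hp y') with h | h
    · exact f.monotone h
    · have hy' : y' ≤ y := by
        simpa only [Function.surjInv_eq] using p.monotone h
      rw [le_antisymm hy hy']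
  have hcomp : (⟨_, hmono⟩ : β →o γ).comp p = f :=
    ext _ _ (funext fun x => hf _ _ (Function.surjInv_eq hp (p x)))
  exact ⟨_, hcomp, fun h hh => cancel_right_of_surjective hp (hh.trans hcomp.symm)⟩

end OrderHom

namespace Nat

variable {P : ℕ → Prop} [DecidablePred P]

theorem count_eq_count_iff {x y : ℕ} (hxy : x ≤ y) :
    count P x = count P y ↔ ∀ i, x ≤ i → i < y → ¬ P i := by
  constructor
  · intro h i hxi hiy hi
    have := count_strict_mono hi hiy
    have := count_monotone P hxi
    omega
  · intro h
    by_contra hne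
    obtain ⟨i, ⟨hxi, hiy⟩, hi⟩ :=
      exists_of_count_lt_count ((count_monotone P hxy).lt_of_ne hne)
    exact h i hxi hiy hi

theorem exists_le_count_eq {m N : ℕ} (h : m ≤ count P N) : ∃ x ≤ N, count P x = m := by
  induction N with
  | zero => exact ⟨0, le_rfl, by rw [count_zero] at h ⊢; omega⟩
  | succ N ih =>
    by_cases hm : m ≤ count P N
    · obtain ⟨x, hx, rfl⟩ := ih hm
      exact ⟨x, by omega, rfl⟩
    · have := count_succ P N
      exact ⟨N + 1, le_rfl, by split_ifs at this <;> omega⟩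

end Nat

theorem Fin.apply_eq_apply_of_forall_castSucc_eq_succ {β : Type*} {N : ℕ} (f : Fin (N + 1) → β)
    {x y : Fin (N + 1)} (hxy : x ≤ y)
    (h : ∀ i : Fin N, x ≤ i.castSucc → i.succ ≤ y → f i.castSucc = f i.succ) : f x = f y := by
  induction y using Fin.induction with
  | zero => rw [nonpos_iff_eq_zero.mp hxy]
  | succ i ih =>
    rcases hxy.eq_or_lt with rfl | hlt
    · rfl
    have hxi : x ≤ i.castSucc := Fin.le_castSucc_iff.mpr hlt
    exact (ih hxi fun j hj hji => h j hj (hji.trans (Fin.castSucc_le_succ i))).trans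
      (h i hxi le_rfl)

section Count

variable (P : ℕ → Prop) [DecidablePred P] (N : ℕ)

def countOrderHom : Fin (N + 1) →o Fin (Nat.count P N + 1) where
  toFun x := ⟨Nat.count P x, Nat.lt_succ_of_le (Nat.count_monotone P x.is_le)⟩
  monotone' _ _ h := Nat.count_monotone P h

theorem activeMap_countOrderHom : ActiveMap (countOrderHom P N) :=
  ⟨Fin.ext (Nat.count_zero P), rfl⟩

theorem countOrderHom_surjective : Function.Surjective (countOrderHom P N) := by
  intro m
  obtain ⟨x, hx, hcount⟩ := Nat.exists_le_count_eq (Nat.le_of_lt_succ m.is_lt)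
  exact ⟨⟨x, Nat.lt_succ_of_le hx⟩, Fin.ext hcount⟩

variable {P N}

theorem countOrderHom_eq_iff {x y : Fin (N + 1)} (hxy : x ≤ y) :
    countOrderHom P N x = countOrderHom P N y ↔
      ∀ i : Fin N, x ≤ i.castSucc → i.succ ≤ y → ¬ P i := by
  rw [Fin.ext_iff]
  refine (Nat.count_eq_count_iff hxy).trans
    ⟨fun h i hxi hiy => h i hxi hiy, fun h i hxi hiy => h ⟨i, by omega⟩ hxi hiy⟩

end Count

section Pushout

variable {n n' n'' : ℕ} (a : Fin (n + 1) →o Fin (n' + 1)) (s : Fin (n + 1) →o Fin (n'' + 1))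

def IsCollapsedStep (i : ℕ) : Prop :=
  ∃ j j', s j = s j' ∧ (a j : ℕ) ≤ i ∧ i < a j'

variable [DecidablePred (IsCollapsedStep a s)]

abbrev pushoutMap :
    Fin (n' + 1) →o Fin (Nat.count (fun i => ¬ IsCollapsedStep a s i) n' + 1) :=
  countOrderHom (fun i => ¬ IsCollapsedStep a s i) n'

theorem pushoutMap_apply_eq_of_eq {j j' : Fin (n + 1)} (hs : s j = s j') :
    pushoutMap a s (a j) = pushoutMap a s (a j') := by
  wlog hj : j ≤ j' generalizing j j'
  · exact (this hs.symm (le_of_not_ge hj)).symm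
  rw [countOrderHom_eq_iff (a.monotone hj)]
  exact fun i hji hij' => not_not.mpr ⟨j, j', hs, hji, hij'⟩

theorem apply_eq_of_pushoutMap_eq {β : Type*} [PartialOrder β] {f : Fin (n' + 1) →o β}
    (hf : ∀ j j', s j = s j' → f (a j) = f (a j')) {x y : Fin (n' + 1)}
    (hxy : pushoutMap a s x = pushoutMap a s y) : f x = f y := by
  wlog hle : x ≤ y generalizing x y
  · exact (this hxy.symm (le_of_not_ge hle)).symm
  refine Fin.apply_eq_apply_of_forall_castSucc_eq_succ f hle fun i hxi hiy => ?_
  obtain ⟨j, j', hs, hji, hij'⟩ := not_not.mp ((countOrderHom_eq_iff hle).mp hxy i hxi hiy)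
  refine le_antisymm (f.monotone (Fin.castSucc_le_succ i)) ?_
  calc f i.succ ≤ f (a j') := f.monotone (Fin.le_def.mpr hij')
    _ = f (a j) := (hf j j' hs).symm
    _ ≤ f i.castSucc := f.monotone (Fin.le_def.mpr hji)

end Pushout

/-- Let `a : S → S'` be an active monotone map of finite linear orders and let
`s : S → S''` be a surjective active monotone map. Then the pushout of `a` along `s`
exists in the category of finite linear orders and active monotone maps: there are
active maps `p : S' → S₀` (surjective, parallel to `s`) and `b : S'' → S₀` with
`p ∘ a = b ∘ s`, satisfying the universal property of the pushout. -/
theorem active_pushout (n n' n'' : ℕ)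
    (a : Fin (n + 1) →o Fin (n' + 1)) (s : Fin (n + 1) →o Fin (n'' + 1))
    (ha : ActiveMap a) (hs : ActiveMap s) (hsurj : Function.Surjective s) :
    ∃ (k : ℕ) (p : Fin (n' + 1) →o Fin (k + 1)) (b : Fin (n'' + 1) →o Fin (k + 1)),
      ActiveMap p ∧ ActiveMap b ∧ Function.Surjective p ∧
      p.comp a = b.comp s ∧
      ∀ (l : ℕ) (f : Fin (n' + 1) →o Fin (l + 1)) (g : Fin (n'' + 1) →o Fin (l + 1)),
        ActiveMap f → ActiveMap g → f.comp a = g.comp s →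
        ∃! h : Fin (k + 1) →o Fin (l + 1),
          ActiveMap h ∧ h.comp p = f ∧ h.comp b = g := by
  classical
  have hp : ActiveMap (pushoutMap a s) := activeMap_countOrderHom _ _
  have hp_surj : Function.Surjective (pushoutMap a s) := countOrderHom_surjective _ _
  obtain ⟨b, hbs, -⟩ :=
    OrderHom.existsUnique_comp_eq_of_surjective hsurj (f := (pushoutMap a s).comp a)
      fun _ _ => pushoutMap_apply_eq_of_eq a s
  refine ⟨_, pushoutMap a s, b, hp, hs.of_comp (hbs ▸ hp.comp ha), hp_surj, hbs.symm, ?_⟩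
  intro l f g hf _ hfg
  have hfs : ∀ j j', s j = s j' → f (a j) = f (a j') := fun j j' hj =>
    calc f (a j) = g (s j) := DFunLike.congr_fun hfg j
      _ = g (s j') := congrArg g hj
      _ = f (a j') := (DFunLike.congr_fun hfg j').symm
  obtain ⟨h, hhp, huniq⟩ :=
    OrderHom.existsUnique_comp_eq_of_surjective hp_surj
      fun _ _ => apply_eq_of_pushoutMap_eq a s hfs
  refine ⟨h, ⟨hp.of_comp (hhp ▸ hf), hhp, OrderHom.cancel_right_of_surjective hsurj ?_⟩,
    fun h' ⟨_, hh'p, _⟩ => huniq h' hh'p⟩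
  rw [OrderHom.comp_assoc, hbs, ← OrderHom.comp_assoc, hhp, hfg]
end
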